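/- arXiv:math/0508054 — 3 statements merged into one kernel-verified Lean document; each statement's English description precedes it below -/
import Mathlib

section
/- Let K be a compact metric space and U : C(K) → C(K) a positive linear operator with U1 = 1 (a Markov–Feller operator) such that for every g ∈ C(K) and every x ∈ K, the Cesàro averages (1/n) ∑_{k=0}^{n-1} U^k g(x) converge to μ(g) for a fixed Borel probability measure μ. Then for every g ∈ C(K), the Cesàro averages (1/n) ∑_{k=0}^{n-1} U^k g converge to the constant function μ(g) uniformly on K. -/
/-!
Write `h = g - μ(g)`. Pointwise convergence and compactness give one length `M` such that from
every point `x` some block of length `m ≤ M` has `∑_{k<m} U^k h (x) ≤ m ε`. A Markov operator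
preserves upper bounds by constants, so cutting `[0, n)` into such blocks, each started at the
point where the previous one ends, bounds `∑_{k<n} U^k h` by `n ε + M ‖h‖` uniformly on `K`;
the same applies to `-h`.
-/

open MeasureTheory Filter Finset

theorem CompactSpace.exists_forall_exists_le_mem {X : Type*} [TopologicalSpace X]
    [CompactSpace X] {V : ℕ → Set X} (hV : ∀ n, IsOpen (V n)) (hcover : ∀ x, ∃ n, x ∈ V n) :
    ∃ M, ∀ x, ∃ n ≤ M, x ∈ V n := by
  obtain ⟨M, hM⟩ := isCompact_univ.elim_directed_cover (Set.accumulate V)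
    (fun n => isOpen_biUnion fun k _ => hV k)
    (fun x _ => by simpa [Set.iUnion_accumulate] using hcover x) Set.directed_accumulate
  exact ⟨M, fun x => Set.mem_accumulate.1 (hM (Set.mem_univ x))⟩

theorem abs_inv_mul_sub {a : ℝ} (ha : 0 < a) (s c : ℝ) : |a⁻¹ * s - c| = a⁻¹ * |s - a * c| := by
  rw [← abs_of_pos (inv_pos.2 ha), ← abs_mul, abs_of_pos (inv_pos.2 ha), mul_sub,
    inv_mul_cancel_left₀ ha.ne']

namespace ContinuousMap

variable {K : Type*} [TopologicalSpace K]

structure IsMarkovOperator (U : C(K, ℝ) →L[ℝ] C(K, ℝ)) : Prop where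
  nonneg : ∀ f, 0 ≤ f → 0 ≤ U f
  map_one : U 1 = 1

namespace IsMarkovOperator

variable {U : C(K, ℝ) →L[ℝ] C(K, ℝ)}

theorem map_const (hU : IsMarkovOperator U) (c : ℝ) : U (const K c) = const K c := by
  have : const K c = c • 1 := by ext; simp
  rw [this, map_smul, hU.map_one]

theorem le_const_of_le_const (hU : IsMarkovOperator U) {f : C(K, ℝ)} {B : ℝ}
    (hf : f ≤ const K B) : U f ≤ const K B := by
  have := hU.nonneg _ (sub_nonneg.2 hf)
  rwa [map_sub, hU.map_const, sub_nonneg] at this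

theorem pow (hU : IsMarkovOperator U) (k : ℕ) : IsMarkovOperator (U ^ k) := by
  induction k with
  | zero => exact ⟨fun f hf => hf, rfl⟩
  | succ k ih =>
    refine ⟨fun f hf => ?_, ?_⟩
    · rw [pow_succ, mul_apply_eq_comp]
      exact ih.nonneg _ (hU.nonneg f hf)
    · rw [pow_succ, mul_apply_eq_comp, hU.map_one, ih.map_one]

theorem apply_le_norm [CompactSpace K] (hU : IsMarkovOperator U) (f : C(K, ℝ)) (x : K) :
    U f x ≤ ‖f‖ :=
  hU.le_const_of_le_const (fun y => (le_abs_self _).trans (norm_coe_le_norm f y)) x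

end IsMarkovOperator

def ergodicSum (U : C(K, ℝ) →L[ℝ] C(K, ℝ)) (n : ℕ) (f : C(K, ℝ)) : C(K, ℝ) :=
  ∑ k ∈ range n, (U ^ k) f

variable (U : C(K, ℝ) →L[ℝ] C(K, ℝ))

theorem ergodicSum_apply (n : ℕ) (f : C(K, ℝ)) (x : K) :
    ergodicSum U n f x = ∑ k ∈ range n, (U ^ k) f x := by
  simp [ergodicSum]

theorem ergodicSum_add (m n : ℕ) (f : C(K, ℝ)) :
    ergodicSum U (m + n) f = ergodicSum U m f + (U ^ m) (ergodicSum U n f) := by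
  simp only [ergodicSum, sum_range_add, map_sum, pow_add, mul_apply_eq_comp]

theorem ergodicSum_neg (n : ℕ) (f : C(K, ℝ)) : ergodicSum U n (-f) = -ergodicSum U n f := by
  simp [ergodicSum]

namespace IsMarkovOperator

variable {U}

theorem ergodicSum_sub_const (hU : IsMarkovOperator U) (n : ℕ) (f : C(K, ℝ)) (c : ℝ) (x : K) :
    ergodicSum U n (f - const K c) x = ergodicSum U n f x - n * c := by
  simp only [ergodicSum, map_sub, (hU.pow _).map_const, sum_sub_distrib]
  simp

variable [CompactSpace K]

theorem ergodicSum_le_mul_norm (hU : IsMarkovOperator U) (n : ℕ) (f : C(K, ℝ)) (x : K) :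
    ergodicSum U n f x ≤ n * ‖f‖ := by
  rw [ergodicSum_apply]
  calc ∑ k ∈ range n, (U ^ k) f x ≤ ∑ _k ∈ range n, ‖f‖ :=
        sum_le_sum fun k _ => (hU.pow k).apply_le_norm f x
    _ = n * ‖f‖ := by simp

theorem ergodicSum_le_of_forall_exists_block (hU : IsMarkovOperator U) {f : C(K, ℝ)} {ε : ℝ}
    (hε : 0 ≤ ε) {M : ℕ}
    (hblock : ∀ x, ∃ m ≤ M, 0 < m ∧ ergodicSum U m f x ≤ m * ε) (n : ℕ) (x : K) :
    ergodicSum U n f x ≤ n * ε + M * ‖f‖ := by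
  induction n using Nat.strong_induction_on generalizing x with
  | _ n ih =>
  obtain ⟨m, hmM, hm, hfm⟩ := hblock x
  rcases le_or_gt n m with hnm | hmn
  · calc ergodicSum U n f x ≤ n * ‖f‖ := hU.ergodicSum_le_mul_norm n f x
      _ ≤ M * ‖f‖ := by gcongr; exact_mod_cast hnm.trans hmM
      _ ≤ n * ε + M * ‖f‖ := le_add_of_nonneg_left (by positivity)
  · obtain ⟨t, rfl⟩ := Nat.exists_eq_add_of_le hmn.le
    have htail : (U ^ m) (ergodicSum U t f) x ≤ t * ε + M * ‖f‖ :=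
      (hU.pow m).le_const_of_le_const (fun y => ih t (by omega) y) x
    rw [ergodicSum_add, coe_add, Pi.add_apply, Nat.cast_add]
    linarith

theorem abs_ergodicSum_sub_le_of_forall_exists_block (hU : IsMarkovOperator U) {g : C(K, ℝ)}
    {c ε : ℝ} (hε : 0 ≤ ε) {M : ℕ}
    (hblock : ∀ x, ∃ m ≤ M, 0 < m ∧ |ergodicSum U m g x - m * c| ≤ m * ε) (n : ℕ) (x : K) :
    |ergodicSum U n g x - n * c| ≤ n * ε + M * ‖g - const K c‖ := by
  set f := g - const K c
  have hf (m : ℕ) (y : K) : ergodicSum U m f y = ergodicSum U m g y - m * c :=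
    hU.ergodicSum_sub_const m g c y
  have hneg (m : ℕ) (y : K) : ergodicSum U m (-f) y = -ergodicSum U m f y := by
    rw [ergodicSum_neg, coe_neg, Pi.neg_apply]
  rw [← hf, abs_le']
  constructor
  · refine hU.ergodicSum_le_of_forall_exists_block hε (fun y => ?_) n x
    obtain ⟨m, hmM, hm, hy⟩ := hblock y
    exact ⟨m, hmM, hm, by rw [hf]; exact (abs_le'.1 hy).1⟩
  · rw [← hneg, ← norm_neg f]
    refine hU.ergodicSum_le_of_forall_exists_block hε (fun y => ?_) n x
    obtain ⟨m, hmM, hm, hy⟩ := hblock y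
    exact ⟨m, hmM, hm, by rw [hneg, hf]; exact (abs_le'.1 hy).2⟩

end IsMarkovOperator

theorem exists_bounded_block_of_tendsto [CompactSpace K] {U : C(K, ℝ) →L[ℝ] C(K, ℝ)} {g : C(K, ℝ)}
    {c : ℝ} (hg : ∀ x, Tendsto (fun n : ℕ => (n : ℝ)⁻¹ * ergodicSum U n g x) atTop (nhds c))
    {ε : ℝ} (hε : 0 < ε) : ∃ M, ∀ x, ∃ m ≤ M, 0 < m ∧ |ergodicSum U m g x - m * c| ≤ m * ε := by
  have hcover (x : K) : ∃ m, |ergodicSum U m g x - m * c| < m * ε := by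
    obtain ⟨N, hN⟩ := Metric.tendsto_atTop.1 (hg x) ε hε
    have hpos : (0 : ℝ) < (N + 1 : ℕ) := by positivity
    have hclose := hN (N + 1) N.le_succ
    rw [Real.dist_eq, abs_inv_mul_sub hpos, inv_mul_lt_iff₀ hpos] at hclose
    exact ⟨N + 1, hclose⟩
  obtain ⟨M, hM⟩ := CompactSpace.exists_forall_exists_le_mem
    (V := fun m => {x | |ergodicSum U m g x - m * c| < m * ε})
    (fun m => isOpen_lt (by fun_prop) continuous_const) hcover
  refine ⟨M, fun x => ?_⟩
  obtain ⟨m, hmM, hx⟩ := hM x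
  have hm : 0 < m := Nat.pos_of_ne_zero fun h => by simp [h, ergodicSum] at hx
  exact ⟨m, hmM, hm, hx.le⟩

theorem IsMarkovOperator.tendstoUniformly_ergodicAverage [CompactSpace K]
    {U : C(K, ℝ) →L[ℝ] C(K, ℝ)} (hU : IsMarkovOperator U) {g : C(K, ℝ)} {c : ℝ}
    (hg : ∀ x, Tendsto (fun n : ℕ => (n : ℝ)⁻¹ * ergodicSum U n g x) atTop (nhds c)) :
    TendstoUniformly (fun (n : ℕ) x => (n : ℝ)⁻¹ * ergodicSum U n g x) (fun _ => c) atTop := by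
  rw [Metric.tendstoUniformly_iff]
  intro ε hε
  obtain ⟨M, hM⟩ := exists_bounded_block_of_tendsto hg (half_pos hε)
  set C := M * ‖g - const K c‖
  filter_upwards [tendsto_natCast_atTop_atTop.eventually_gt_atTop (2 * C / ε)] with n hn x
  have hn0 : (0 : ℝ) < n := lt_of_le_of_lt (by positivity) hn
  rw [div_lt_iff₀ hε] at hn
  rw [dist_comm, Real.dist_eq, abs_inv_mul_sub hn0, inv_mul_lt_iff₀ hn0]
  calc |ergodicSum U n g x - n * c| ≤ n * (ε / 2) + C :=
        hU.abs_ergodicSum_sub_le_of_forall_exists_block (half_pos hε).le hM n x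
    _ < n * ε := by linarith

end ContinuousMap

theorem kakutani_yosida_uniform_general {K : Type} [MetricSpace K] [CompactSpace K]
    [MeasurableSpace K]
    (U : C(K, ℝ) →L[ℝ] C(K, ℝ))
    (hpos : ∀ f : C(K, ℝ), (∀ x, 0 ≤ f x) → ∀ x, 0 ≤ (U f) x)
    (hone : U 1 = 1)
    (μ : Measure K)
    (hptw : ∀ (g : C(K, ℝ)) (x : K),
      Tendsto (fun n : ℕ => (n : ℝ)⁻¹ * ∑ k ∈ Finset.range n, ((U ^ k) g) x)
        atTop (nhds (∫ y, g y ∂μ))) :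
    ∀ g : C(K, ℝ),
      TendstoUniformly (fun (n : ℕ) (x : K) => (n : ℝ)⁻¹ * ∑ k ∈ Finset.range n, ((U ^ k) g) x)
        (fun _ => ∫ y, g y ∂μ) atTop := by
  intro g
  have hU : ContinuousMap.IsMarkovOperator U := ⟨hpos, hone⟩
  simpa only [ContinuousMap.ergodicSum_apply] using hU.tendstoUniformly_ergodicAverage fun x => by
    simpa only [ContinuousMap.ergodicSum_apply] using hptw g x

/-- Kakutani–Yosida mean ergodic lemma: for a Markov–Feller operator `U` on `C(K)`
(`K` compact metric), if the Cesàro averages `(1/n) ∑_{k<n} U^k g (x)` converge pointwise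
to `μ(g)` for every `g` and `x`, then for every `g` they converge uniformly on `K`
to the constant `μ(g)`. -/
theorem kakutani_yosida_uniform {K : Type} [MetricSpace K] [CompactSpace K]
    [MeasurableSpace K] [BorelSpace K]
    (U : C(K, ℝ) →L[ℝ] C(K, ℝ))
    (hpos : ∀ f : C(K, ℝ), (∀ x, 0 ≤ f x) → ∀ x, 0 ≤ (U f) x)
    (hone : U 1 = 1)
    (μ : Measure K) [IsProbabilityMeasure μ]
    (hptw : ∀ (g : C(K, ℝ)) (x : K),
      Tendsto (fun n : ℕ => (n : ℝ)⁻¹ * ∑ k ∈ Finset.range n, ((U ^ k) g) x)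
        atTop (nhds (∫ y, g y ∂μ))) :
    ∀ g : C(K, ℝ),
      TendstoUniformly (fun (n : ℕ) (x : K) => (n : ℝ)⁻¹ * ∑ k ∈ Finset.range n, ((U ^ k) g) x)
        (fun _ => ∫ y, g y ∂μ) atTop :=
  kakutani_yosida_uniform_general U hpos hone μ hptw
end

section
/- For the Markov process (X_n) generated by a finite Markov system started at x, with X_0 = x and X_n(σ) = w_{σ_n} ∘ ... ∘ w_{σ_1}(x), and X'_n(σ) = f_{σ_n}(X_{n-1}(σ)), the conditional expectation of X'_{n+k} given X_n satisfies E(X'_{n+k} | X_n) = ∑_{e ∈ E} U^{k-1}(p_e f_e)(X_n) P_x-almost surely, for every n ≥ 1 and k ≥ 1. -/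
open MeasureTheory Filter Finset

/-- A finite Markov system `(K_{i(e)}, w_e, p_e)_{e ∈ E}` on a metric space `K`:
`V` is the vertex set, `E` the finite edge set, `i` assigns to each edge its initial
vertex, `Kv j` is the vertex set `K_j` (open, the `K_j` partition `K`), `w e` the map and
`p e` the probability function of the edge `e`, with `p e` continuous and bounded away
from zero on `K_{i(e)}`, vanishing off `K_{i(e)}`, and `∑_{e : i(e) = j} p e = 1` on `K_j`. -/
structure MarkovSystem (V E : Type) [DecidableEq V] [Fintype E] (K : Type) [MetricSpace K]
    [MeasurableSpace K] where
  i : E → V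
  Kv : V → Set K
  w : E → K → K
  p : E → K → ℝ
  open_Kv : ∀ j, IsOpen (Kv j)
  cover : (⋃ e : E, Kv (i e)) = (Set.univ : Set K)
  disjoint_Kv : ∀ j j', j ≠ j' → Disjoint (Kv j) (Kv j')
  w_contOn : ∀ e, ContinuousOn (w e) (Kv (i e))
  p_contOn : ∀ e, ContinuousOn (p e) (Kv (i e))
  p_nonneg : ∀ e x, 0 ≤ p e x
  p_le_one : ∀ e x, p e x ≤ 1
  p_pos : ∀ e, ∃ δ > 0, ∀ x ∈ Kv (i e), δ ≤ p e x
  p_zero_off : ∀ e x, x ∉ Kv (i e) → p e x = 0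
  p_sum_vertex : ∀ j, ∀ x ∈ Kv j,
    ∑ e ∈ Finset.univ.filter (fun e => i e = j), p e x = 1
  measurable_w : ∀ e, Measurable (w e)
  measurable_p : ∀ e, Measurable (p e)

namespace MarkovSystem

variable {V E K : Type} [DecidableEq V] [Fintype E] [MetricSpace K] [MeasurableSpace K]

/-- The orbit `X_0 = x`, `X_{n} = w_{σ_n} ∘ ... ∘ w_{σ_1}(x)` of the point `x` under the
code `σ` (with `σ_k` given by `σ (k-1)`). -/
def orbit (M : MarkovSystem V E K) (x : K) (σ : ℕ → E) : ℕ → K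
  | 0 => x
  | n + 1 => M.w (σ n) (M.orbit x σ n)

/-- The Markov operator `U g = ∑ e, p_e · (g ∘ w_e)`. -/
def Uop (M : MarkovSystem V E K) (g : K → ℝ) : K → ℝ :=
  fun x => ∑ e : E, M.p e x * g (M.w e x)

/-- The weight `p_{σ_1}(x) p_{σ_2}(w_{σ_1} x) ⋯ p_{σ_n}(w_{σ_{n-1}} ∘ ... ∘ w_{σ_1} x)`
of the cylinder `[σ_1, ..., σ_n]` for the start point `x`. -/
def cylWeight (M : MarkovSystem V E K) (x : K) (σ : ℕ → E) (n : ℕ) : ℝ :=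
  ∏ k ∈ Finset.range n, M.p (σ k) (M.orbit x σ k)

/-- `Px` is the family of Markov measures on the code space `Σ⁺ = E^ℕ` generated by the
Markov system, with `P_x` having the Dirac initial distribution `δ_x`. -/
def IsMarkovMeasure (M : MarkovSystem V E K) [MeasurableSpace E]
    (Px : K → Measure (ℕ → E)) : Prop :=
  (∀ x, IsProbabilityMeasure (Px x)) ∧
    ∀ (x : K) (n : ℕ) (σ : ℕ → E),
      Px x {τ | ∀ k < n, τ k = σ k} = ENNReal.ofReal (M.cylWeight x σ n)

/-- `μ` is an invariant Borel probability measure for the Markov system: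
`∫ U g dμ = ∫ g dμ` for every bounded continuous `g`. -/
def Invariant (M : MarkovSystem V E K) (μ : Measure K) : Prop :=
  ∀ g : BoundedContinuousFunction K ℝ, ∫ y, M.Uop g y ∂μ = ∫ y, g y ∂μ

/-- The positive part of an extended real, as an extended nonnegative real. -/
noncomputable def erealPos (a : EReal) : ENNReal := (a ⊔ 0).abs

/-- The integral `∫_s g dμ` of an extended-real-valued function, as an extended real
(positive part minus negative part, both as lower integrals). -/
noncomputable def erealIntegral (μ : Measure K) (s : Set K) (g : K → EReal) : EReal :=
  (((∫⁻ y in s, erealPos (g y) ∂μ) : ENNReal) : EReal)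
    - (((∫⁻ y in s, erealPos (-(g y)) ∂μ) : ENNReal) : EReal)

/-- The Markov system is contractive with some contraction rate `0 < a < 1`. -/
def Contractive (M : MarkovSystem V E K) : Prop :=
  ∃ a : ℝ, 0 < a ∧ a < 1 ∧ ∀ j, ∀ x ∈ M.Kv j, ∀ y ∈ M.Kv j,
    (∑ e ∈ Finset.univ.filter (fun e => M.i e = j), M.p e x * dist (M.w e x) (M.w e y))
      ≤ a * dist x y

end MarkovSystem

set_option linter.unusedSectionVars false


namespace MarkovSystem

variable {V E K : Type} [DecidableEq V] [Fintype E] [MetricSpace K] [MeasurableSpace K]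

lemma orbit_congr (M : MarkovSystem V E K) (x : K) {σ τ : ℕ → E} :
    ∀ {m : ℕ}, (∀ j < m, σ j = τ j) → M.orbit x σ m = M.orbit x τ m
  | 0, _ => rfl
  | m + 1, h => by
    have hm : M.orbit x σ m = M.orbit x τ m :=
      M.orbit_congr x (fun j hj => h j (Nat.lt_succ_of_lt hj))
    simp only [orbit, hm, h m (Nat.lt_succ_self m)]

variable [MeasurableSpace E] [MeasurableSingletonClass E] [BorelSpace K]

lemma measurable_orbit (M : MarkovSystem V E K) (x : K) :
    ∀ m, Measurable fun σ : ℕ → E => M.orbit x σ m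
  | 0 => measurable_const
  | m + 1 => by
    have h1 := M.measurable_orbit x m
    have h2 : Measurable fun q : K × E => M.w q.2 q.1 :=
      measurable_from_prod_countable_left fun e => M.measurable_w e
    exact h2.comp (h1.prodMk (measurable_pi_apply m))

lemma p_sum_one (M : MarkovSystem V E K) (x : K) : ∑ e : E, M.p e x = 1 := by
  classical
  obtain ⟨e₀, he₀⟩ : ∃ e : E, x ∈ M.Kv (M.i e) := by
    have hx : x ∈ (⋃ e : E, M.Kv (M.i e)) := M.cover ▸ Set.mem_univ x
    simpa using hx
  rw [← Finset.sum_filter_of_ne (p := fun e => M.i e = M.i e₀) (fun e _ hne => by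
    by_contra hje
    have hxe : x ∈ M.Kv (M.i e) := by
      by_contra hx
      exact hne (M.p_zero_off e x hx)
    exact Set.disjoint_left.mp (M.disjoint_Kv _ _ hje) hxe he₀)]
  exact M.p_sum_vertex (M.i e₀) x he₀

lemma abs_uop_le (M : MarkovSystem V E K) {h : K → ℝ} {C : ℝ} (hC : ∀ y, |h y| ≤ C) (y : K) :
    |M.Uop h y| ≤ C := by
  calc |M.Uop h y| ≤ ∑ e : E, |M.p e y * h (M.w e y)| := Finset.abs_sum_le_sum_abs _ _
    _ ≤ ∑ e : E, M.p e y * C := by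
        refine Finset.sum_le_sum fun e _ => ?_
        rw [abs_mul, abs_of_nonneg (M.p_nonneg e y)]
        exact mul_le_mul_of_nonneg_left (hC _) (M.p_nonneg e y)
    _ = C := by rw [← Finset.sum_mul, M.p_sum_one y, one_mul]

lemma abs_uop_iter_le (M : MarkovSystem V E K) {h : K → ℝ} {C : ℝ} (hC : ∀ y, |h y| ≤ C) :
    ∀ (r : ℕ) (y : K), |(M.Uop)^[r] h y| ≤ C
  | 0, y => hC y
  | r + 1, y => by
    rw [Function.iterate_succ_apply]
    exact M.abs_uop_iter_le (fun z => M.abs_uop_le hC z) r y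

lemma measurable_uop (M : MarkovSystem V E K) {h : K → ℝ} (hh : Measurable h) :
    Measurable (M.Uop h) := by
  unfold Uop
  exact Finset.measurable_sum _ fun e _ => (M.measurable_p e).mul (hh.comp (M.measurable_w e))

lemma measurable_uop_iter (M : MarkovSystem V E K) {h : K → ℝ} (hh : Measurable h) :
    ∀ r : ℕ, Measurable ((M.Uop)^[r] h)
  | 0 => hh
  | r + 1 => by
    rw [Function.iterate_succ_apply]
    exact M.measurable_uop_iter (M.measurable_uop hh) r

lemma uop_iter_sum (M : MarkovSystem V E K) (q : E → K → ℝ) :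
    ∀ (r : ℕ) (y : K),
      (M.Uop)^[r] (fun z => ∑ e : E, q e z) y = ∑ e : E, (M.Uop)^[r] (q e) y
  | 0, y => rfl
  | r + 1, y => by
    rw [Function.iterate_succ_apply]
    have hU : M.Uop (fun z => ∑ e : E, q e z) = fun z => ∑ e : E, M.Uop (q e) z := by
      funext z
      simp only [Uop, Finset.mul_sum]
      exact Finset.sum_comm
    rw [hU, M.uop_iter_sum (fun e => M.Uop (q e)) r y]
    exact Finset.sum_congr rfl fun e _ => by rw [← Function.iterate_succ_apply]

/-- Extension of a finite code to an infinite one by a default symbol. -/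
def extMap (d : E) (m : ℕ) (s : Fin m → E) : ℕ → E := fun j => if h : j < m then s ⟨j, h⟩ else d

lemma extMap_lt (d : E) (m : ℕ) (s : Fin m → E) {j : ℕ} (h : j < m) :
    extMap d m s j = s ⟨j, h⟩ := dif_pos h

/-- The cylinder set of a finite code. -/
def cylSet (d : E) (m : ℕ) (s : Fin m → E) : Set (ℕ → E) :=
  {τ | ∀ j < m, τ j = extMap d m s j}

lemma measurableSet_cylSet (d : E) (m : ℕ) (s : Fin m → E) :
    MeasurableSet (cylSet d m s) := by
  have : cylSet d m s = ⋂ j ∈ Finset.range m,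
      (fun τ : ℕ → E => τ j) ⁻¹' {extMap d m s j} := by
    ext τ
    simp [cylSet]
  rw [this]
  exact Finset.measurableSet_biInter _ fun j _ =>
    (measurable_pi_apply j) (measurableSet_singleton _)

lemma cylWeight_nonneg (M : MarkovSystem V E K) (x : K) (σ : ℕ → E) (m : ℕ) :
    0 ≤ M.cylWeight x σ m :=
  Finset.prod_nonneg fun j _ => M.p_nonneg _ _

lemma integral_eq_sum (M : MarkovSystem V E K) {Px : K → Measure (ℕ → E)}
    (hPx : M.IsMarkovMeasure Px) (x : K) (d : E) (m : ℕ) (ψ : (ℕ → E) → ℝ)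
    (hψ : ∀ σ τ : ℕ → E, (∀ j < m, σ j = τ j) → ψ σ = ψ τ) :
    ∫ σ, ψ σ ∂(Px x)
      = ∑ s : Fin m → E, M.cylWeight x (extMap d m s) m * ψ (extMap d m s) := by
  haveI := hPx.1 x
  classical
  have hdecomp : ∀ σ, ψ σ = ∑ s : Fin m → E,
      Set.indicator (cylSet d m s) (fun _ => ψ (extMap d m s)) σ := by
    intro σ
    have hmem : ∀ s : Fin m → E, σ ∈ cylSet d m s ↔ s = fun j : Fin m => σ (j : ℕ) := by
      intro s
      constructor
      · intro hs
        funext j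
        have := hs j j.2
        rw [extMap_lt d m s j.2] at this
        exact this.symm
      · rintro rfl
        intro j hj
        rw [extMap_lt d m _ hj]
    rw [Finset.sum_eq_single (fun j : Fin m => σ (j : ℕ))]
    · rw [Set.indicator_of_mem ((hmem _).mpr rfl)]
      refine (hψ _ _ fun j hj => ?_).symm
      rw [extMap_lt d m _ hj]
    · intro s _ hne
      rw [Set.indicator_of_notMem]
      intro hs
      exact hne ((hmem s).mp hs)
    · intro hs
      exact absurd (Finset.mem_univ _) hs
  calc ∫ σ, ψ σ ∂(Px x)
      = ∫ σ, ∑ s : Fin m → E,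
          Set.indicator (cylSet d m s) (fun _ => ψ (extMap d m s)) σ ∂(Px x) := by
        exact integral_congr_ae (Filter.Eventually.of_forall hdecomp)
    _ = ∑ s : Fin m → E,
          ∫ σ, Set.indicator (cylSet d m s) (fun _ => ψ (extMap d m s)) σ ∂(Px x) :=
        integral_finset_sum _ fun s _ =>
          (integrable_const _).indicator (measurableSet_cylSet d m s)
    _ = ∑ s : Fin m → E, M.cylWeight x (extMap d m s) m * ψ (extMap d m s) := by
        refine Finset.sum_congr rfl fun s _ => ?_
        rw [integral_indicator_const _ (measurableSet_cylSet d m s)]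
        have : Px x (cylSet d m s) = ENNReal.ofReal (M.cylWeight x (extMap d m s) m) :=
          hPx.2 x m (extMap d m s)
        rw [measureReal_def, this, ENNReal.toReal_ofReal (M.cylWeight_nonneg x _ m), smul_eq_mul]

end MarkovSystem

namespace MarkovSystem

variable {V E K : Type} [DecidableEq V] [Fintype E] [MetricSpace K] [MeasurableSpace K]
variable [MeasurableSpace E] [MeasurableSingletonClass E] [BorelSpace K]

lemma integral_step (M : MarkovSystem V E K) {Px : K → Measure (ℕ → E)}
    (hPx : M.IsMarkovMeasure Px) (x : K) (d : E) (m : ℕ) (Φ : E → K → ℝ)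
    (ψ : (ℕ → E) → ℝ) (hψ : ∀ σ τ : ℕ → E, (∀ j < m, σ j = τ j) → ψ σ = ψ τ) :
    ∫ σ, ψ σ * Φ (σ m) (M.orbit x σ m) ∂(Px x)
      = ∫ σ, ψ σ * (∑ e : E, M.p e (M.orbit x σ m) * Φ e (M.orbit x σ m)) ∂(Px x) := by
  classical
  have horb : ∀ (σ τ : ℕ → E), (∀ i < m, σ i = τ i) →
      M.orbit x σ m = M.orbit x τ m := fun σ τ hh => M.orbit_congr x hh
  have hψ1 : ∀ σ τ : ℕ → E, (∀ j < m + 1, σ j = τ j) →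
      ψ σ * Φ (σ m) (M.orbit x σ m) = ψ τ * Φ (τ m) (M.orbit x τ m) := by
    intro σ τ h
    have hlt : ∀ j < m, σ j = τ j := fun j hj => h j (Nat.lt_succ_of_lt hj)
    rw [hψ σ τ hlt, h m (Nat.lt_succ_self m), horb σ τ hlt]
  have hψ2 : ∀ σ τ : ℕ → E, (∀ j < m, σ j = τ j) →
      ψ σ * (∑ e : E, M.p e (M.orbit x σ m) * Φ e (M.orbit x σ m))
        = ψ τ * (∑ e : E, M.p e (M.orbit x τ m) * Φ e (M.orbit x τ m)) := by
    intro σ τ h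
    rw [hψ σ τ h, horb σ τ h]
  rw [M.integral_eq_sum hPx x d (m + 1) _ hψ1, M.integral_eq_sum hPx x d m _ hψ2]
  rw [← Equiv.sum_comp (Fin.snocEquiv (fun _ : Fin (m + 1) => E)), Fintype.sum_prod_type,
    Finset.sum_comm]
  refine Finset.sum_congr rfl fun a _ => ?_
  rw [Finset.mul_sum, Finset.mul_sum]
  refine Finset.sum_congr rfl fun e _ => ?_
  set t : Fin (m + 1) → E := (Fin.snocEquiv (fun _ : Fin (m + 1) => E)) (e, a) with ht
  have htc : ∀ (j : ℕ) (hj : j < m), t (Fin.castSucc ⟨j, hj⟩) = a ⟨j, hj⟩ := by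
    intro j hj
    rw [ht]
    exact Fin.snoc_castSucc (α := fun _ : Fin (m + 1) => E) (p := a) (x := e) (i := ⟨j, hj⟩)
  have htl : t (Fin.last m) = e := by
    rw [ht]
    exact Fin.snoc_last (α := fun _ : Fin (m + 1) => E) (p := a) (x := e)
  have f1 : ∀ j, j < m → extMap d (m + 1) t j = extMap d m a j := by
    intro j hj
    rw [extMap_lt d (m + 1) t (Nat.lt_succ_of_lt hj), extMap_lt d m a hj]
    exact htc j hj
  have f2 : extMap d (m + 1) t m = e := by
    rw [extMap_lt d (m + 1) t (Nat.lt_succ_self m)]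
    exact htl
  have f3 : ∀ j, j ≤ m → M.orbit x (extMap d (m + 1) t) j = M.orbit x (extMap d m a) j :=
    fun j hj => M.orbit_congr x fun i hi => f1 i (lt_of_lt_of_le hi hj)
  have f4 : M.cylWeight x (extMap d (m + 1) t) (m + 1)
      = M.cylWeight x (extMap d m a) m * M.p e (M.orbit x (extMap d m a) m) := by
    unfold cylWeight
    rw [Finset.prod_range_succ]
    congr 1
    · refine Finset.prod_congr rfl fun j hj => ?_
      have hj' := Finset.mem_range.mp hj
      rw [f1 j hj', f3 j (le_of_lt hj')]
    · rw [f2, f3 m le_rfl]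
  have f5 : ψ (extMap d (m + 1) t) = ψ (extMap d m a) := hψ _ _ f1
  rw [f4, f5, f2, f3 m le_rfl]
  ring

lemma integral_chain (M : MarkovSystem V E K) {Px : K → Measure (ℕ → E)}
    (hPx : M.IsMarkovMeasure Px) (x : K) (d : E) (m : ℕ) (ψ : (ℕ → E) → ℝ)
    (hψ : ∀ σ τ : ℕ → E, (∀ j < m, σ j = τ j) → ψ σ = ψ τ) :
    ∀ (r : ℕ) (h : K → ℝ),
      ∫ σ, ψ σ * h (M.orbit x σ (m + r)) ∂(Px x)
        = ∫ σ, ψ σ * (M.Uop)^[r] h (M.orbit x σ m) ∂(Px x)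
  | 0, h => by simp
  | r + 1, h => by
    have hψ' : ∀ σ τ : ℕ → E, (∀ j < m + r, σ j = τ j) → ψ σ = ψ τ :=
      fun σ τ hh => hψ σ τ fun j hj => hh j (lt_of_lt_of_le hj (Nat.le_add_right m r))
    have step := M.integral_step hPx x d (m + r) (fun e y => h (M.w e y)) ψ hψ'
    have h1 : ∫ σ, ψ σ * h (M.orbit x σ (m + (r + 1))) ∂(Px x)
        = ∫ σ, ψ σ * (M.Uop h) (M.orbit x σ (m + r)) ∂(Px x) := step
    rw [h1, M.integral_chain hPx x d m ψ hψ r (M.Uop h)]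
    simp only [← Function.iterate_succ_apply]

end MarkovSystem


open MarkovSystem in
/-- For the Markov process `X_n(σ) = w_{σ_n} ∘ ... ∘ w_{σ_1}(x)` generated by a finite
Markov system started at `x`, with `X'_n(σ) = f_{σ_n}(X_{n-1}(σ))` (the values being
real `P_x`-a.s. since the orbit stays in the domains `K_{i(e)}` a.s., so we take `toReal`),
the conditional expectation of `X'_{n+k}` given `X_n` satisfies
`E(X'_{n+k} | X_n) = ∑_e U^{k-1}(p_e f_e)(X_n)` `P_x`-almost surely, for `n, k ≥ 1`. -/
theorem condexp_markov_process {V E K : Type} [DecidableEq V] [Fintype E]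
    [MeasurableSpace E] [MeasurableSingletonClass E]
    [MetricSpace K] [MeasurableSpace K] [BorelSpace K]
    (M : MarkovSystem V E K)
    (Px : K → Measure (ℕ → E)) (hPx : M.IsMarkovMeasure Px)
    (f : E → K → EReal)
    (hfm : ∀ e, Measurable (f e))
    (hfc : ∀ e, ContinuousOn (f e) (M.Kv (M.i e)))
    (hfb : ∀ e, ∃ C : ℝ, ∀ y ∈ M.Kv (M.i e),
      -(C : EReal) ≤ f e y ∧ f e y ≤ (C : EReal))
    (x : K) (n k : ℕ) (hn : 1 ≤ n) (hk : 1 ≤ k) :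
    (Px x)[(fun σ : ℕ → E => (f (σ (n + k - 1)) (M.orbit x σ (n + k - 1))).toReal) |
        MeasurableSpace.comap (fun σ : ℕ → E => M.orbit x σ n) inferInstance]
      =ᵐ[Px x]
      fun σ : ℕ → E =>
        ∑ e : E, (M.Uop)^[k - 1] (fun y => M.p e y * (f e y).toReal) (M.orbit x σ n) := by
  classical
  haveI hprob : IsProbabilityMeasure (Px x) := hPx.1 x
  have hEne : Nonempty E := by
    by_contra hE
    rw [not_nonempty_iff] at hE
    haveI hempty : IsEmpty (ℕ → E) := ⟨fun f => hE.false (f 0)⟩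
    have h1 := measure_univ (μ := Px x)
    rw [Set.univ_eq_empty_iff.mpr hempty, measure_empty] at h1
    exact zero_ne_one h1
  obtain ⟨d⟩ := hEne
  obtain ⟨k', rfl⟩ : ∃ k', k = k' + 1 := ⟨k - 1, by omega⟩
  simp only [show n + (k' + 1) - 1 = n + k' from by omega,
    show k' + 1 - 1 = k' from by omega]
  have hm : MeasurableSpace.comap (fun σ : ℕ → E => M.orbit x σ n)
      inferInstance ≤ (inferInstance : MeasurableSpace (ℕ → E)) :=
    (M.measurable_orbit x n).comap_le
  haveI := isFiniteMeasure_trim (μ := Px x) hm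
  choose C hC using hfb
  -- boundedness facts
  have htb : ∀ (e : E) (y : K), y ∈ M.Kv (M.i e) → |(f e y).toReal| ≤ max (C e) 0 := by
    intro e y hy
    obtain ⟨h1, h2⟩ := hC e y hy
    rw [← EReal.coe_neg] at h1
    have hbot : f e y ≠ ⊥ := by
      intro hb
      rw [hb, le_bot_iff] at h1
      exact EReal.coe_ne_bot _ h1
    have htop : f e y ≠ ⊤ := by
      intro ht
      rw [ht, top_le_iff] at h2
      exact EReal.coe_ne_top _ h2
    have hub : (f e y).toReal ≤ C e := by
      have := EReal.toReal_le_toReal h2 hbot (EReal.coe_ne_top _)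
      simpa using this
    have hlb : -(C e) ≤ (f e y).toReal := by
      have := EReal.toReal_le_toReal h1 (EReal.coe_ne_bot _) htop
      simpa using this
    refine abs_le.mpr ⟨?_, le_trans hub (le_max_left _ _)⟩
    exact le_trans (neg_le_neg (le_max_left _ _)) hlb
  have hqb : ∀ (e : E) (y : K), |M.p e y * (f e y).toReal| ≤ max (C e) 0 := by
    intro e y
    by_cases hy : y ∈ M.Kv (M.i e)
    · rw [abs_mul, abs_of_nonneg (M.p_nonneg e y)]
      calc M.p e y * |(f e y).toReal| ≤ 1 * max (C e) 0 :=
            mul_le_mul (M.p_le_one e y) (htb e y hy) (abs_nonneg _) zero_le_one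
        _ = max (C e) 0 := one_mul _
    · rw [M.p_zero_off e y hy, zero_mul, abs_zero]
      exact le_max_right _ _
  set CX : ℝ := ∑ e : E, max (C e) 0 with hCX
  have hCXe : ∀ e : E, max (C e) 0 ≤ CX :=
    fun e => Finset.single_le_sum (f := fun e => max (C e) 0)
      (fun i _ => le_max_right _ _) (Finset.mem_univ e)
  -- measurability
  have hX'm : Measurable fun σ : ℕ → E =>
      (f (σ (n + k')) (M.orbit x σ (n + k'))).toReal := by
    have houter : Measurable fun pr : K × E => (f pr.2 pr.1).toReal :=
      measurable_from_prod_countable_left fun e => (hfm e).ereal_toReal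
    exact houter.comp ((M.measurable_orbit x (n + k')).prodMk (measurable_pi_apply (n + k')))
  -- bad set is null
  have hbad : Px x {σ : ℕ → E | M.orbit x σ (n + k') ∉ M.Kv (M.i (σ (n + k')))} = 0 := by
    set m₂ := n + k' + 1 with hm₂
    set D : (Fin m₂ → E) → Set (ℕ → E) := fun s =>
      if M.orbit x (extMap d m₂ s) (n + k') ∈ M.Kv (M.i (extMap d m₂ s (n + k'))) then ∅
      else cylSet d m₂ s with hD
    have hsub : {σ : ℕ → E | M.orbit x σ (n + k') ∉ M.Kv (M.i (σ (n + k')))} ⊆ ⋃ s, D s := by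
      intro σ hσ
      refine Set.mem_iUnion.mpr ⟨fun j : Fin m₂ => σ (j : ℕ), ?_⟩
      have hagree : ∀ j, j < m₂ → extMap d m₂ (fun j : Fin m₂ => σ (j : ℕ)) j = σ j :=
        fun j hj => extMap_lt d m₂ _ hj
      have hcyl : σ ∈ cylSet d m₂ (fun j : Fin m₂ => σ (j : ℕ)) :=
        fun j hj => (hagree j hj).symm
      rw [hD]
      simp only
      rw [if_neg]
      · exact hcyl
      · have h1 : M.orbit x (extMap d m₂ (fun j : Fin m₂ => σ (j : ℕ))) (n + k')
            = M.orbit x σ (n + k') :=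
          M.orbit_congr x fun i hi => hagree i (by omega)
        have h2 : extMap d m₂ (fun j : Fin m₂ => σ (j : ℕ)) (n + k') = σ (n + k') :=
          hagree _ (by omega)
        rw [h1, h2]
        exact hσ
    refine measure_mono_null hsub (measure_iUnion_null fun s => ?_)
    rw [hD]
    simp only
    split_ifs with hs
    · exact measure_empty
    · have hcw : Px x (cylSet d m₂ s) = ENNReal.ofReal (M.cylWeight x (extMap d m₂ s) m₂) :=
        hPx.2 x m₂ (extMap d m₂ s)
      rw [hcw]
      have hw : M.cylWeight x (extMap d m₂ s) m₂ = 0 := by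
        refine Finset.prod_eq_zero (Finset.mem_range.mpr (show n + k' < m₂ by omega)) ?_
        exact M.p_zero_off _ _ hs
      rw [hw, ENNReal.ofReal_zero]
  have hXae : ∀ᵐ σ ∂Px x, M.orbit x σ (n + k') ∈ M.Kv (M.i (σ (n + k'))) := by
    rw [ae_iff]
    exact hbad
  have hXint : Integrable (fun σ : ℕ → E =>
      (f (σ (n + k')) (M.orbit x σ (n + k'))).toReal) (Px x) := by
    refine Integrable.mono' (integrable_const CX) hX'm.aestronglyMeasurable ?_
    filter_upwards [hXae] with σ hσ
    calc ‖(f (σ (n + k')) (M.orbit x σ (n + k'))).toReal‖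
        = |(f (σ (n + k')) (M.orbit x σ (n + k'))).toReal| := rfl
      _ ≤ max (C (σ (n + k'))) 0 := htb _ _ hσ
      _ ≤ CX := hCXe _
  -- the candidate function
  have hqm : ∀ e : E, Measurable fun y => M.p e y * (f e y).toReal :=
    fun e => (M.measurable_p e).mul (hfm e).ereal_toReal
  have hGm : Measurable fun y : K =>
      ∑ e : E, (M.Uop)^[k'] (fun z => M.p e z * (f e z).toReal) y :=
    Finset.measurable_sum _ fun e _ => M.measurable_uop_iter (hqm e) k'
  have hgm0 : Measurable fun σ : ℕ → E =>
      ∑ e : E, (M.Uop)^[k'] (fun z => M.p e z * (f e z).toReal) (M.orbit x σ n) :=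
    hGm.comp (M.measurable_orbit x n)
  have hGb : ∀ y : K,
      |∑ e : E, (M.Uop)^[k'] (fun z => M.p e z * (f e z).toReal) y| ≤ CX := by
    intro y
    calc |∑ e : E, (M.Uop)^[k'] (fun z => M.p e z * (f e z).toReal) y|
        ≤ ∑ e : E, |(M.Uop)^[k'] (fun z => M.p e z * (f e z).toReal) y| :=
          Finset.abs_sum_le_sum_abs _ _
      _ ≤ ∑ e : E, max (C e) 0 :=
          Finset.sum_le_sum fun e _ => M.abs_uop_iter_le (hqb e) k' y
      _ = CX := rfl
  have hgint : Integrable (fun σ : ℕ → E =>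
      ∑ e : E, (M.Uop)^[k'] (fun z => M.p e z * (f e z).toReal) (M.orbit x σ n)) (Px x) :=
    Integrable.mono' (integrable_const CX) hgm0.aestronglyMeasurable
      (Filter.Eventually.of_forall fun σ => hGb _)
  have horb' : Measurable[MeasurableSpace.comap (fun σ : ℕ → E => M.orbit x σ n)
      inferInstance] (fun σ : ℕ → E => M.orbit x σ n) :=
    measurable_iff_comap_le.mpr le_rfl
  have hgm' : AEStronglyMeasurable[MeasurableSpace.comap
      (fun σ : ℕ → E => M.orbit x σ n) inferInstance]
      (fun σ : ℕ → E =>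
        ∑ e : E, (M.Uop)^[k'] (fun z => M.p e z * (f e z).toReal) (M.orbit x σ n)) (Px x) :=
    ⟨_, (hGm.comp horb').stronglyMeasurable, Filter.EventuallyEq.refl _ _⟩
  have hgeq : ∀ s : Set (ℕ → E),
      MeasurableSet[MeasurableSpace.comap (fun σ : ℕ → E => M.orbit x σ n) inferInstance] s →
      Px x s < ⊤ →
      ∫ σ in s, (∑ e : E, (M.Uop)^[k'] (fun z => M.p e z * (f e z).toReal)
          (M.orbit x σ n)) ∂Px x
        = ∫ σ in s, (f (σ (n + k')) (M.orbit x σ (n + k'))).toReal ∂Px x := by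
    intro s hs _
    obtain ⟨B, hB, rfl⟩ := hs
    set A := (fun σ : ℕ → E => M.orbit x σ n) ⁻¹' B with hA
    have hAm : MeasurableSet A := (M.measurable_orbit x n) hB
    set ψ : (ℕ → E) → ℝ := A.indicator (fun _ => (1 : ℝ)) with hψ
    have hψdep : ∀ σ τ : ℕ → E, (∀ j < n, σ j = τ j) → ψ σ = ψ τ := by
      intro σ τ h
      have hiff : σ ∈ A ↔ τ ∈ A := by
        rw [hA]
        simp only [Set.mem_preimage]
        rw [M.orbit_congr x h]
      by_cases hσA : σ ∈ A
      · rw [hψ, Set.indicator_of_mem hσA, Set.indicator_of_mem (hiff.mp hσA)]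
      · rw [hψ, Set.indicator_of_notMem hσA,
          Set.indicator_of_notMem (fun hτ => hσA (hiff.mpr hτ))]
    have hbridge : ∀ F : (ℕ → E) → ℝ, ∫ σ in A, F σ ∂Px x = ∫ σ, ψ σ * F σ ∂Px x := by
      intro F
      rw [← integral_indicator hAm]
      refine integral_congr_ae (Filter.Eventually.of_forall fun σ => ?_)
      show A.indicator F σ = ψ σ * F σ
      by_cases hσ : σ ∈ A
      · have ho : ψ σ = 1 := Set.indicator_of_mem hσ _
        rw [Set.indicator_of_mem hσ, ho, one_mul]
      · have hz : ψ σ = 0 := Set.indicator_of_notMem hσ _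
        rw [Set.indicator_of_notMem hσ, hz, zero_mul]
    rw [hbridge, hbridge]
    have hψdep' : ∀ σ τ : ℕ → E, (∀ j < n + k', σ j = τ j) → ψ σ = ψ τ :=
      fun σ τ h => hψdep σ τ fun j hj => h j (by omega)
    have step := M.integral_step hPx x d (n + k') (fun e y => (f e y).toReal) ψ hψdep'
    have chain := M.integral_chain hPx x d n ψ hψdep k'
      (fun y => ∑ e : E, M.p e y * (f e y).toReal)
    calc ∫ σ, ψ σ * (∑ e : E, (M.Uop)^[k'] (fun z => M.p e z * (f e z).toReal)
            (M.orbit x σ n)) ∂Px x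
        = ∫ σ, ψ σ * (M.Uop)^[k'] (fun y => ∑ e : E, M.p e y * (f e y).toReal)
            (M.orbit x σ n) ∂Px x := by
          refine integral_congr_ae (Filter.Eventually.of_forall fun σ => ?_)
          exact (congrArg (fun t => ψ σ * t)
            (M.uop_iter_sum (fun e z => M.p e z * (f e z).toReal) k' (M.orbit x σ n))).symm
      _ = ∫ σ, ψ σ * (∑ e : E, M.p e (M.orbit x σ (n + k'))
            * (f e (M.orbit x σ (n + k'))).toReal) ∂Px x := chain.symm
      _ = ∫ σ, ψ σ * (f (σ (n + k')) (M.orbit x σ (n + k'))).toReal ∂Px x := step.symm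
  exact (ae_eq_condExp_of_forall_setIntegral_eq hm hXint
    (fun s _ _ => hgint.integrableOn) hgeq hgm').symm
end

section
/- For the Markov process (X_n) generated by a finite Markov system with starting point x, the sequence Z^k_n := E(X'_n | X_{n-k+1}) − E(X'_n | X_{n-k}) (for n > k, and 0 otherwise) satisfies E(Z^k_n | Z^k_{n-1}, ..., Z^k_1) = 0 P_x-almost surely. -/
open MeasureTheory Filter Finset

namespace MarkovSystem

variable {V E K : Type} [DecidableEq V] [Fintype E] [MetricSpace K] [MeasurableSpace K]
  [MeasurableSpace E]

/-- `X'_n(σ) = f_{σ_n}(X_{n-1}(σ))` for the Markov process generated by the Markov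
system started at `x` (real-valued via `toReal`; `P_x`-a.s. the orbit stays in the
domains `K_{i(e)}` where `f_e` is finite). -/
noncomputable def Xp (M : MarkovSystem V E K) (x : K) (f : E → K → EReal)
    (n : ℕ) (σ : ℕ → E) : ℝ :=
  (f (σ (n - 1)) (M.orbit x σ (n - 1))).toReal

/-- The martingale differences
`Z^k_n = E(X'_n | X_{n-k+1}) − E(X'_n | X_{n-k})` for `n > k > 1`,
`Z^1_n = X'_n − E(X'_n | X_{n-1})` for `n > 1`, and `0` otherwise,
where the conditional expectations are taken with respect to the measure `P_x`. -/
noncomputable def Z (M : MarkovSystem V E K) (Px : Measure (ℕ → E)) (x : K)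
    (f : E → K → EReal) (k n : ℕ) : (ℕ → E) → ℝ :=
  if k = 1 then
    (if 1 < n then
      fun σ => M.Xp x f n σ -
        (Px[M.Xp x f n |
          MeasurableSpace.comap (fun σ : ℕ → E => M.orbit x σ (n - 1)) inferInstance]) σ
    else 0)
  else if k < n then
    fun σ =>
      (Px[M.Xp x f n |
        MeasurableSpace.comap (fun σ : ℕ → E => M.orbit x σ (n - k + 1)) inferInstance]) σ
      - (Px[M.Xp x f n |
        MeasurableSpace.comap (fun σ : ℕ → E => M.orbit x σ (n - k)) inferInstance]) σ
  else 0

end MarkovSystem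
section ZAux
set_option linter.unusedSectionVars false
set_option linter.unusedVariables false
open scoped Classical

open MeasureTheory MarkovSystem

variable {V E K : Type} [DecidableEq V] [Fintype E] [MeasurableSpace E]
  [MeasurableSingletonClass E] [MetricSpace K] [MeasurableSpace K] [BorelSpace K]

namespace ZAux

/-- Extension of a finite word to an infinite one, by a default letter. -/
def ext (e₀ : E) {l : ℕ} (w : Fin l → E) : ℕ → E :=
  fun j => if h : j < l then w ⟨j, h⟩ else e₀

/-- The cylinder set of a finite word. -/
def Cyl {l : ℕ} (w : Fin l → E) : Set (ℕ → E) := {τ | ∀ i : Fin l, τ (i : ℕ) = w i}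

theorem ext_lt (e₀ : E) {l : ℕ} (w : Fin l → E) {j : ℕ} (h : j < l) :
    ext e₀ w j = w ⟨j, h⟩ := dif_pos h

theorem orbit_congr (M : MarkovSystem V E K) (x : K) {σ τ : ℕ → E} :
    ∀ {m : ℕ}, (∀ j < m, σ j = τ j) → M.orbit x σ m = M.orbit x τ m
  | 0, _ => rfl
  | m + 1, h => by
    simp only [MarkovSystem.orbit]
    rw [orbit_congr M x (fun j hj => h j (Nat.lt_succ_of_lt hj)), h m (Nat.lt_succ_self m)]

theorem cylWeight_congr (M : MarkovSystem V E K) (x : K) {σ τ : ℕ → E} {m : ℕ}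
    (h : ∀ j < m, σ j = τ j) : M.cylWeight x σ m = M.cylWeight x τ m := by
  unfold MarkovSystem.cylWeight
  refine Finset.prod_congr rfl fun j hj => ?_
  rw [Finset.mem_range] at hj
  rw [h j hj, orbit_congr M x (fun i hi => h i (hi.trans hj))]

theorem cylWeight_nonneg (M : MarkovSystem V E K) (x : K) (σ : ℕ → E) (m : ℕ) :
    0 ≤ M.cylWeight x σ m :=
  Finset.prod_nonneg fun _ _ => M.p_nonneg _ _

theorem cylWeight_succ (M : MarkovSystem V E K) (x : K) (σ : ℕ → E) (m : ℕ) :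
    M.cylWeight x σ (m + 1) = M.cylWeight x σ m * M.p (σ m) (M.orbit x σ m) :=
  Finset.prod_range_succ _ _

theorem measurable_orbit (M : MarkovSystem V E K) (x : K) :
    ∀ m : ℕ, Measurable fun σ : ℕ → E => M.orbit x σ m
  | 0 => measurable_const
  | m + 1 => by
    have h1 : Measurable fun q : K × E => M.w q.2 q.1 :=
      measurable_from_prod_countable_left fun e => M.measurable_w e
    exact h1.comp ((measurable_orbit M x m).prodMk (measurable_pi_apply m))

theorem measurableSet_Cyl {l : ℕ} (w : Fin l → E) : MeasurableSet (Cyl w) := by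
  have h : Cyl w = ⋂ i : Fin l, (fun τ : ℕ → E => τ (i : ℕ)) ⁻¹' {w i} := by
    ext τ; simp [Cyl]
  rw [h]
  exact MeasurableSet.iInter fun i => measurable_pi_apply (i : ℕ) (measurableSet_singleton _)

theorem orbit_of_mem_Cyl (M : MarkovSystem V E K) (x : K) (e₀ : E) {l : ℕ} {w : Fin l → E}
    {σ : ℕ → E} (hσ : σ ∈ Cyl w) {m : ℕ} (hm : m ≤ l) :
    M.orbit x σ m = M.orbit x (ext e₀ w) m := by
  refine orbit_congr M x fun j hj => ?_
  have hjl : j < l := lt_of_lt_of_le hj hm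
  rw [ext_lt e₀ w hjl]
  exact hσ ⟨j, hjl⟩

theorem meas_Cyl (M : MarkovSystem V E K) {Px : K → Measure (ℕ → E)}
    (hPx : M.IsMarkovMeasure Px) (x : K) (e₀ : E) {l : ℕ} (w : Fin l → E) :
    Px x (Cyl w) = ENNReal.ofReal (M.cylWeight x (ext e₀ w) l) := by
  have h := hPx.2 x l (ext e₀ w)
  have hset : {τ : ℕ → E | ∀ j < l, τ j = ext e₀ w j} = Cyl w := by
    ext τ
    constructor
    · intro h i
      have := h (i : ℕ) i.isLt
      rwa [ext_lt e₀ w i.isLt, Fin.eta] at this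
    · intro h j hj
      rw [ext_lt e₀ w hj]
      exact h ⟨j, hj⟩
  rwa [hset] at h


theorem mem_Cyl_snoc {l : ℕ} {w : Fin l → E} {e : E} {σ : ℕ → E} :
    σ ∈ Cyl (Fin.snoc w e) ↔ σ ∈ Cyl w ∧ σ l = e := by
  constructor
  · intro h
    refine ⟨fun i => ?_, ?_⟩
    · have := h (Fin.castSucc i)
      simpa [Fin.snoc_castSucc] using this
    · have := h (Fin.last l)
      simpa [Fin.snoc_last] using this
  · rintro ⟨h1, h2⟩ i
    induction i using Fin.lastCases with
    | last => simpa [Fin.snoc_last] using h2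
    | cast j => simpa [Fin.snoc_castSucc] using h1 j

theorem Cyl_eq_iUnion_snoc {l : ℕ} (w : Fin l → E) :
    Cyl w = ⋃ e : E, Cyl (Fin.snoc w e) := by
  ext σ
  simp only [Set.mem_iUnion, mem_Cyl_snoc]
  exact ⟨fun h => ⟨σ l, h, rfl⟩, fun ⟨e, h, _⟩ => h⟩

theorem disjoint_Cyl {l : ℕ} {w w' : Fin l → E} (h : w ≠ w') :
    Disjoint (Cyl w) (Cyl w') := by
  rw [Set.disjoint_left]
  intro σ h1 h2
  exact h (funext fun i => (h1 i).symm.trans (h2 i))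

theorem snoc_ne {l : ℕ} (w : Fin l → E) {e e' : E} (h : e ≠ e') :
    (Fin.snoc w e : Fin (l + 1) → E) ≠ Fin.snoc w e' := fun hc => by
  have h2 := congrFun hc (Fin.last l)
  rw [Fin.snoc_last, Fin.snoc_last] at h2
  exact h h2

theorem ext_snoc_agree (e₀ : E) {l : ℕ} (w : Fin l → E) (e : E) :
    ∀ j < l, ext e₀ (Fin.snoc w e) j = ext e₀ w j := by
  intro j hj
  rw [ext_lt e₀ _ (Nat.lt_succ_of_lt hj), ext_lt e₀ w hj]
  simp [Fin.snoc, hj]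

theorem ext_snoc_last (e₀ : E) {l : ℕ} (w : Fin l → E) (e : E) :
    ext e₀ (Fin.snoc w e) l = e := by
  rw [ext_lt e₀ _ (Nat.lt_succ_self l)]
  simp [Fin.snoc]

theorem orbit_ext_snoc (M : MarkovSystem V E K) (x : K) (e₀ : E) {l : ℕ} (w : Fin l → E)
    (e : E) {m : ℕ} (hm : m ≤ l) :
    M.orbit x (ext e₀ (Fin.snoc w e)) m = M.orbit x (ext e₀ w) m :=
  orbit_congr M x fun j hj => ext_snoc_agree e₀ w e j (lt_of_lt_of_le hj hm)

theorem cylWeight_ext_snoc (M : MarkovSystem V E K) (x : K) (e₀ : E) {l : ℕ}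
    (w : Fin l → E) (e : E) :
    M.cylWeight x (ext e₀ (Fin.snoc w e)) (l + 1)
      = M.cylWeight x (ext e₀ w) l * M.p e (M.orbit x (ext e₀ w) l) := by
  rw [cylWeight_succ, cylWeight_congr M x (ext_snoc_agree e₀ w e), ext_snoc_last,
    orbit_ext_snoc M x e₀ w e (le_refl l)]

theorem orbit_ext_snoc_succ (M : MarkovSystem V E K) (x : K) (e₀ : E) {l : ℕ}
    (w : Fin l → E) (e : E) :
    M.orbit x (ext e₀ (Fin.snoc w e)) (l + 1) = M.w e (M.orbit x (ext e₀ w) l) := by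
  show M.w (ext e₀ (Fin.snoc w e) l) (M.orbit x (ext e₀ (Fin.snoc w e)) l) = _
  rw [ext_snoc_last, orbit_ext_snoc M x e₀ w e (le_refl l)]

theorem exists_bound_of_factor (e₀ : E) (l : ℕ) {h : (ℕ → E) → ℝ}
    (hfac : ∀ σ τ : ℕ → E, (∀ j < l, σ j = τ j) → h σ = h τ) :
    ∃ C, ∀ σ, |h σ| ≤ C := by
  classical
  have hne : (Finset.univ.image fun w : Fin l → E => |h (ext e₀ w)|).Nonempty :=
    Finset.image_nonempty.mpr ⟨fun _ => e₀, Finset.mem_univ _⟩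
  refine ⟨(Finset.univ.image fun w : Fin l → E => |h (ext e₀ w)|).max' hne, fun σ => ?_⟩
  have hh : h σ = h (ext e₀ fun i : Fin l => σ (i : ℕ)) :=
    hfac _ _ fun j hj => (ext_lt e₀ (fun i : Fin l => σ (i : ℕ)) hj).symm
  rw [hh]
  exact Finset.le_max' _ _ (Finset.mem_image_of_mem (fun w : Fin l → E => |h (ext e₀ w)|)
    (Finset.mem_univ (fun i : Fin l => σ (i : ℕ))))

theorem integrable_of_factor {μ : Measure (ℕ → E)} [IsFiniteMeasure μ] (e₀ : E) (l : ℕ)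
    {h : (ℕ → E) → ℝ} (hm : Measurable h)
    (hfac : ∀ σ τ : ℕ → E, (∀ j < l, σ j = τ j) → h σ = h τ) : Integrable h μ := by
  obtain ⟨C, hC⟩ := exists_bound_of_factor e₀ l hfac
  exact ⟨hm.aestronglyMeasurable,
    HasFiniteIntegral.of_bounded (C := C) (ae_of_all μ fun σ => by
      simpa [Real.norm_eq_abs] using hC σ)⟩

theorem integral_cyl_succ {μ : Measure (ℕ → E)} {h : (ℕ → E) → ℝ} (hint : Integrable h μ)
    {l : ℕ} (w : Fin l → E) :
    ∫ σ in Cyl w, h σ ∂μ = ∑ e : E, ∫ σ in Cyl (Fin.snoc w e), h σ ∂μ := by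
  rw [Cyl_eq_iUnion_snoc w,
    integral_iUnion (fun e => measurableSet_Cyl _)
      (fun e e' hee' => disjoint_Cyl (snoc_ne w hee'))
      hint.integrableOn,
    tsum_fintype]

/-- `Uf(y) = ∑ e, p_e(y) (f_e(y)).toReal`. -/
noncomputable def Uf (M : MarkovSystem V E K) (f : E → K → EReal) : K → ℝ :=
  fun y => ∑ e : E, M.p e y * (f e y).toReal

theorem measurable_Uf (M : MarkovSystem V E K) {f : E → K → EReal}
    (hfm : ∀ e, Measurable (f e)) : Measurable (Uf M f) :=
  Finset.measurable_sum _ fun e _ => (M.measurable_p e).mul (hfm e).ereal_toReal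

theorem measurable_Uop (M : MarkovSystem V E K) {g : K → ℝ} (hg : Measurable g) :
    Measurable (M.Uop g) :=
  Finset.measurable_sum _ fun e _ => (M.measurable_p e).mul (hg.comp (M.measurable_w e))

theorem measurable_Uop_iter (M : MarkovSystem V E K) {g : K → ℝ} (hg : Measurable g) :
    ∀ d : ℕ, Measurable (M.Uop^[d] g)
  | 0 => hg
  | d + 1 => by
    rw [Function.iterate_succ_apply']
    exact measurable_Uop M (measurable_Uop_iter M hg d)

theorem sum_mul_Uop (M : MarkovSystem V E K) (g : K → ℝ) (c : ℝ) (y : K) :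
    ∑ e : E, c * M.p e y * g (M.w e y) = c * M.Uop g y := by
  unfold MarkovSystem.Uop
  rw [Finset.mul_sum]
  exact Finset.sum_congr rfl fun e _ => by ring

theorem setIntegral_const_on (M : MarkovSystem V E K) {Px : K → Measure (ℕ → E)}
    (hPx : M.IsMarkovMeasure Px) (x : K) (e₀ : E) {l : ℕ} (w : Fin l → E)
    {h : (ℕ → E) → ℝ} {c : ℝ} (hc : ∀ σ ∈ Cyl w, h σ = c) :
    ∫ σ in Cyl w, h σ ∂(Px x) = M.cylWeight x (ext e₀ w) l * c := by
  rw [setIntegral_congr_fun (measurableSet_Cyl w) hc, setIntegral_const,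
    measureReal_def, meas_Cyl M hPx x e₀ w, ENNReal.toReal_ofReal (cylWeight_nonneg M x _ l), smul_eq_mul]

theorem setIntegral_comp_orbit (M : MarkovSystem V E K) {Px : K → Measure (ℕ → E)}
    (hPx : M.IsMarkovMeasure Px) (x : K) (e₀ : E) {g : K → ℝ} (hg : Measurable g) :
    ∀ (d l : ℕ) (w : Fin l → E),
      ∫ σ in Cyl w, g (M.orbit x σ (l + d)) ∂(Px x)
        = M.cylWeight x (ext e₀ w) l * (M.Uop^[d] g) (M.orbit x (ext e₀ w) l) := by
  intro d
  induction d with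
  | zero =>
    intro l w
    simpa using setIntegral_const_on M hPx x e₀ w
      (fun σ hσ => by rw [orbit_of_mem_Cyl M x e₀ hσ (le_refl l)])
  | succ d ih =>
    intro l w
    haveI : IsProbabilityMeasure (Px x) := hPx.1 x
    have hint : Integrable (fun σ => g (M.orbit x σ (l + (d + 1)))) (Px x) :=
      integrable_of_factor e₀ (l + (d + 1)) (hg.comp (measurable_orbit M x _))
        (fun σ τ hστ => by rw [orbit_congr M x (fun j hj => hστ j hj)])
    rw [integral_cyl_succ hint]
    have hterm : ∀ e : E, ∫ σ in Cyl (Fin.snoc w e), g (M.orbit x σ (l + (d + 1))) ∂(Px x)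
        = M.cylWeight x (ext e₀ w) l * M.p e (M.orbit x (ext e₀ w) l)
          * (M.Uop^[d] g) (M.w e (M.orbit x (ext e₀ w) l)) := by
      intro e
      have h1 := ih (l + 1) (Fin.snoc w e)
      rw [show l + 1 + d = l + (d + 1) by omega] at h1
      rw [h1, cylWeight_ext_snoc M x e₀ w e, orbit_ext_snoc_succ M x e₀ w e]
    rw [Finset.sum_congr rfl fun e _ => hterm e, sum_mul_Uop,
      Function.iterate_succ_apply' M.Uop d g]

theorem measurable_Xp (M : MarkovSystem V E K) (x : K) {f : E → K → EReal}
    (hfm : ∀ e, Measurable (f e)) (n : ℕ) : Measurable (M.Xp x f n) := by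
  have h1 : Measurable fun q : K × E => f q.2 q.1 :=
    measurable_from_prod_countable_left fun e => hfm e
  exact (h1.comp ((measurable_orbit M x (n - 1)).prodMk (measurable_pi_apply (n - 1)))).ereal_toReal

theorem Xp_factor (M : MarkovSystem V E K) (x : K) (f : E → K → EReal) {n : ℕ} (hn : 1 ≤ n) :
    ∀ σ τ : ℕ → E, (∀ j < n, σ j = τ j) → M.Xp x f n σ = M.Xp x f n τ := by
  intro σ τ h
  unfold MarkovSystem.Xp
  rw [h (n - 1) (by omega), orbit_congr M x (fun j hj => h j (by omega))]

theorem integrable_Xp (M : MarkovSystem V E K) {Px : K → Measure (ℕ → E)}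
    (hPx : M.IsMarkovMeasure Px) (x : K) (e₀ : E) {f : E → K → EReal}
    (hfm : ∀ e, Measurable (f e)) {n : ℕ} (hn : 1 ≤ n) :
    Integrable (M.Xp x f n) (Px x) :=
  haveI : IsProbabilityMeasure (Px x) := hPx.1 x
  integrable_of_factor e₀ n (measurable_Xp M x hfm n) (Xp_factor M x f hn)

theorem setIntegral_Xp (M : MarkovSystem V E K) {Px : K → Measure (ℕ → E)}
    (hPx : M.IsMarkovMeasure Px) (x : K) (e₀ : E) {f : E → K → EReal}
    (hfm : ∀ e, Measurable (f e)) {n : ℕ} :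
    ∀ (d l : ℕ) (w : Fin l → E), l + d + 1 = n →
      ∫ σ in Cyl w, M.Xp x f n σ ∂(Px x)
        = M.cylWeight x (ext e₀ w) l * (M.Uop^[d] (Uf M f)) (M.orbit x (ext e₀ w) l) := by
  haveI : IsProbabilityMeasure (Px x) := hPx.1 x
  intro d
  induction d with
  | zero =>
    intro l w hln
    have hn : 1 ≤ n := by omega
    have hint : Integrable (M.Xp x f n) (Px x) := integrable_Xp M hPx x e₀ hfm hn
    rw [integral_cyl_succ hint]
    have hterm : ∀ e : E, ∫ σ in Cyl (Fin.snoc w e), M.Xp x f n σ ∂(Px x)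
        = M.cylWeight x (ext e₀ w) l * M.p e (M.orbit x (ext e₀ w) l)
          * (f e (M.orbit x (ext e₀ w) l)).toReal := by
      intro e
      have hval : ∀ σ ∈ Cyl (Fin.snoc w e),
          M.Xp x f n σ = (f e (M.orbit x (ext e₀ w) l)).toReal := by
        intro σ hσ
        unfold MarkovSystem.Xp
        have hl : n - 1 = l := by omega
        rw [hl]
        have hσl : σ l = e := (mem_Cyl_snoc.1 hσ).2
        rw [hσl, orbit_of_mem_Cyl M x e₀ hσ (by omega : l ≤ l + 1),
          orbit_ext_snoc M x e₀ w e (le_refl l)]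
      rw [setIntegral_const_on M hPx x e₀ (Fin.snoc w e) hval, cylWeight_ext_snoc M x e₀ w e]
    rw [Finset.sum_congr rfl fun e _ => hterm e]
    simp only [Function.iterate_zero_apply, Uf, Finset.mul_sum]
    exact Finset.sum_congr rfl fun e _ => by ring
  | succ d ih =>
    intro l w hln
    have hn : 1 ≤ n := by omega
    have hint : Integrable (M.Xp x f n) (Px x) := integrable_Xp M hPx x e₀ hfm hn
    rw [integral_cyl_succ hint]
    have hterm : ∀ e : E, ∫ σ in Cyl (Fin.snoc w e), M.Xp x f n σ ∂(Px x)
        = M.cylWeight x (ext e₀ w) l * M.p e (M.orbit x (ext e₀ w) l)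
          * (M.Uop^[d] (Uf M f)) (M.w e (M.orbit x (ext e₀ w) l)) := by
      intro e
      have h1 := ih (l + 1) (Fin.snoc w e) (by omega)
      rw [h1, cylWeight_ext_snoc M x e₀ w e, orbit_ext_snoc_succ M x e₀ w e]
    rw [Finset.sum_congr rfl fun e _ => hterm e, sum_mul_Uop,
      Function.iterate_succ_apply' M.Uop d (Uf M f)]

theorem setIntegral_eq_sum_cyl {μ : Measure (ℕ → E)} (l : ℕ) {h : (ℕ → E) → ℝ}
    (hint : Integrable h μ) {s : Set (ℕ → E)} (hs : MeasurableSet s) :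
    ∫ σ in s, h σ ∂μ = ∑ w : Fin l → E, ∫ σ in s ∩ Cyl w, h σ ∂μ := by
  have hcover : s = ⋃ w ∈ (Finset.univ : Finset (Fin l → E)), s ∩ Cyl w := by
    ext σ
    simp only [Set.mem_iUnion, Set.mem_inter_iff, Finset.mem_univ, exists_true_left]
    constructor
    · intro hσ
      exact ⟨fun i : Fin l => σ (i : ℕ), ⟨hσ, fun i => rfl⟩⟩
    · rintro ⟨w, hσ, _⟩
      exact hσ
  conv_lhs => rw [hcover]
  rw [integral_biUnion_finset Finset.univ (fun w _ => hs.inter (measurableSet_Cyl w))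
    (fun w _ w' _ hww' => (disjoint_Cyl hww').mono Set.inter_subset_right Set.inter_subset_right)
    (fun w _ => hint.integrableOn)]

theorem condexp_Xp_orbit (M : MarkovSystem V E K) {Px : K → Measure (ℕ → E)}
    (hPx : M.IsMarkovMeasure Px) (x : K) (e₀ : E) {f : E → K → EReal}
    (hfm : ∀ e, Measurable (f e)) {n m : ℕ} (hmn : m + 1 ≤ n) :
    (Px x)[M.Xp x f n |
        MeasurableSpace.comap (fun σ : ℕ → E => M.orbit x σ m) inferInstance]
      =ᵐ[Px x] fun σ => (M.Uop^[n - 1 - m] (Uf M f)) (M.orbit x σ m) := by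
  haveI : IsProbabilityMeasure (Px x) := hPx.1 x
  have hle : MeasurableSpace.comap (fun σ : ℕ → E => M.orbit x σ m) inferInstance
      ≤ MeasurableSpace.pi := (measurable_orbit M x m).comap_le
  have hG : Measurable (M.Uop^[n - 1 - m] (Uf M f)) :=
    measurable_Uop_iter M (measurable_Uf M hfm) _
  have hint_g : Integrable (fun σ => (M.Uop^[n - 1 - m] (Uf M f)) (M.orbit x σ m)) (Px x) :=
    integrable_of_factor e₀ m (hG.comp (measurable_orbit M x m))
      (fun σ τ h => by rw [orbit_congr M x h])
  refine (ae_eq_condExp_of_forall_setIntegral_eq hle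
    (integrable_Xp M hPx x e₀ hfm (by omega))
    (fun s _ _ => hint_g.integrableOn) (fun s hs _ => ?_) ?_).symm
  · obtain ⟨B, hB, rfl⟩ := hs
    have hsm : MeasurableSet ((fun σ : ℕ → E => M.orbit x σ m) ⁻¹' B) :=
      measurable_orbit M x m hB
    rw [setIntegral_eq_sum_cyl m hint_g hsm,
      setIntegral_eq_sum_cyl m (integrable_Xp M hPx x e₀ hfm (by omega)) hsm]
    refine Finset.sum_congr rfl fun w _ => ?_
    by_cases hy : M.orbit x (ext e₀ w) m ∈ B
    · have hseq : (fun σ : ℕ → E => M.orbit x σ m) ⁻¹' B ∩ Cyl w = Cyl w := by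
        ext σ
        simp only [Set.mem_inter_iff, Set.mem_preimage]
        refine ⟨And.right, fun hσ => ⟨?_, hσ⟩⟩
        rw [orbit_of_mem_Cyl M x e₀ hσ (le_refl m)]; exact hy
      rw [hseq,
        setIntegral_const_on M hPx x e₀ w
          (fun σ hσ => by rw [orbit_of_mem_Cyl M x e₀ hσ (le_refl m)]),
        setIntegral_Xp M hPx x e₀ hfm (n - 1 - m) m w (by omega)]
    · have hseq : (fun σ : ℕ → E => M.orbit x σ m) ⁻¹' B ∩ Cyl w = ∅ := by
        ext σ
        simp only [Set.mem_inter_iff, Set.mem_preimage, Set.mem_empty_iff_false, iff_false,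
          not_and]
        intro hmem hσ
        exact hy (by rwa [orbit_of_mem_Cyl M x e₀ hσ (le_refl m)] at hmem)
      rw [hseq]; simp
  · exact (hG.comp (comap_measurable _)).stronglyMeasurable.aestronglyMeasurable

theorem measurableSet_word {L : ℕ} (B : Set (Fin L → E)) : MeasurableSet B := by
  have h1 : ∀ w : Fin L → E, MeasurableSet ({w} : Set (Fin L → E)) := by
    intro w
    have h : ({w} : Set (Fin L → E)) = ⋂ i, (fun v : Fin L → E => v i) ⁻¹' {w i} := by
      ext v
      simp [Set.mem_iInter, funext_iff]
    rw [h]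
    exact MeasurableSet.iInter fun i => measurable_pi_apply i (measurableSet_singleton _)
  have h2 : B = ⋃ w ∈ B, {w} := by simp
  rw [h2]
  exact MeasurableSet.biUnion (Set.to_countable B) fun w _ => h1 w

theorem measurable_word_fun {α : Type*} [MeasurableSpace α] {L : ℕ}
    (H : (Fin L → E) → α) : Measurable H := fun _ _ => measurableSet_word _

theorem measurable_restrict_factor {α : Type*} [MeasurableSpace α] (e₀ : E) (L : ℕ)
    {h : (ℕ → E) → α} (hfac : ∀ σ τ : ℕ → E, (∀ j < L, σ j = τ j) → h σ = h τ) :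
    Measurable[MeasurableSpace.comap (fun σ : ℕ → E => fun i : Fin L => σ (i : ℕ))
      MeasurableSpace.pi] h := by
  have heq : h = (fun w : Fin L → E => h (ext e₀ w)) ∘ (fun σ (i : Fin L) => σ (i : ℕ)) := by
    funext σ
    exact hfac σ (ext e₀ fun i : Fin L => σ (i : ℕ))
      (fun j hj => (ext_lt e₀ (fun i : Fin L => σ (i : ℕ)) hj).symm)
  rw [heq]
  exact (measurable_word_fun _).comp (comap_measurable _)

theorem comap_orbit_le (M : MarkovSystem V E K) (x : K) (e₀ : E) {m L : ℕ} (hmL : m ≤ L) :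
    MeasurableSpace.comap (fun σ : ℕ → E => M.orbit x σ m) inferInstance ≤
      MeasurableSpace.comap (fun σ : ℕ → E => fun i : Fin L => σ (i : ℕ))
        MeasurableSpace.pi :=
  measurable_iff_comap_le.mp (measurable_restrict_factor e₀ L
    (fun σ τ h => orbit_congr M x fun j hj => h j (lt_of_lt_of_le hj hmL)))

theorem setIntegral_condexp_eq_sum (M : MarkovSystem V E K) {Px : K → Measure (ℕ → E)}
    (hPx : M.IsMarkovMeasure Px) (x : K) (e₀ : E) {f : E → K → EReal}
    (hfm : ∀ e, Measurable (f e)) {n m L : ℕ} (hmn : m + 1 ≤ n) (hLm : L ≤ m)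
    (B : Set (Fin L → E)) :
    ∫ σ in (fun σ : ℕ → E => fun i : Fin L => σ (i : ℕ)) ⁻¹' B,
        ((Px x)[M.Xp x f n |
          MeasurableSpace.comap (fun σ : ℕ → E => M.orbit x σ m) inferInstance]) σ ∂(Px x)
      = ∑ w : Fin L → E, (if w ∈ B then
          M.cylWeight x (ext e₀ w) L
            * (M.Uop^[n - 1 - L] (Uf M f)) (M.orbit x (ext e₀ w) L) else 0) := by
  haveI : IsProbabilityMeasure (Px x) := hPx.1 x
  have hπ : Measurable fun σ : ℕ → E => fun i : Fin L => σ (i : ℕ) :=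
    measurable_pi_lambda _ fun i => measurable_pi_apply _
  have hsm : MeasurableSet ((fun σ : ℕ → E => fun i : Fin L => σ (i : ℕ)) ⁻¹' B) :=
    hπ (measurableSet_word B)
  have hG : Measurable (M.Uop^[n - 1 - m] (Uf M f)) :=
    measurable_Uop_iter M (measurable_Uf M hfm) _
  have hint_g : Integrable (fun σ => (M.Uop^[n - 1 - m] (Uf M f)) (M.orbit x σ m)) (Px x) :=
    integrable_of_factor e₀ m (hG.comp (measurable_orbit M x m))
      (fun σ τ h => by rw [orbit_congr M x h])
  rw [setIntegral_congr_ae hsm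
    ((condexp_Xp_orbit M hPx x e₀ hfm hmn).mono fun σ hσ _ => hσ)]
  rw [setIntegral_eq_sum_cyl L hint_g hsm]
  refine Finset.sum_congr rfl fun w _ => ?_
  have hmem : ∀ σ ∈ Cyl w, (fun i : Fin L => σ (i : ℕ)) = w := fun σ hσ => funext fun i => hσ i
  by_cases hw : w ∈ B
  · rw [if_pos hw]
    have hseq : (fun σ : ℕ → E => fun i : Fin L => σ (i : ℕ)) ⁻¹' B ∩ Cyl w = Cyl w := by
      ext σ
      simp only [Set.mem_inter_iff, Set.mem_preimage]
      refine ⟨And.right, fun hσ => ⟨?_, hσ⟩⟩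
      rw [hmem σ hσ]; exact hw
    rw [hseq]
    have h1 := setIntegral_comp_orbit M hPx x e₀ hG (m - L) L w
    rw [show L + (m - L) = m from by omega] at h1
    rw [h1, ← Function.iterate_add_apply,
      show m - L + (n - 1 - m) = n - 1 - L from by omega]
  · rw [if_neg hw]
    have hseq : (fun σ : ℕ → E => fun i : Fin L => σ (i : ℕ)) ⁻¹' B ∩ Cyl w = ∅ := by
      ext σ
      simp only [Set.mem_inter_iff, Set.mem_preimage, Set.mem_empty_iff_false, iff_false,
        not_and]
      intro hBσ hσ
      exact hw (by rwa [hmem σ hσ] at hBσ)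
    rw [hseq]; simp

theorem setIntegral_Xp_eq_sum (M : MarkovSystem V E K) {Px : K → Measure (ℕ → E)}
    (hPx : M.IsMarkovMeasure Px) (x : K) (e₀ : E) {f : E → K → EReal}
    (hfm : ∀ e, Measurable (f e)) {n L : ℕ} (hLn : L + 1 ≤ n) (B : Set (Fin L → E)) :
    ∫ σ in (fun σ : ℕ → E => fun i : Fin L => σ (i : ℕ)) ⁻¹' B, M.Xp x f n σ ∂(Px x)
      = ∑ w : Fin L → E, (if w ∈ B then
          M.cylWeight x (ext e₀ w) L
            * (M.Uop^[n - 1 - L] (Uf M f)) (M.orbit x (ext e₀ w) L) else 0) := by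
  haveI : IsProbabilityMeasure (Px x) := hPx.1 x
  have hπ : Measurable fun σ : ℕ → E => fun i : Fin L => σ (i : ℕ) :=
    measurable_pi_lambda _ fun i => measurable_pi_apply _
  have hsm : MeasurableSet ((fun σ : ℕ → E => fun i : Fin L => σ (i : ℕ)) ⁻¹' B) :=
    hπ (measurableSet_word B)
  rw [setIntegral_eq_sum_cyl L (integrable_Xp M hPx x e₀ hfm (by omega)) hsm]
  refine Finset.sum_congr rfl fun w _ => ?_
  have hmem : ∀ σ ∈ Cyl w, (fun i : Fin L => σ (i : ℕ)) = w := fun σ hσ => funext fun i => hσ i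
  by_cases hw : w ∈ B
  · rw [if_pos hw]
    have hseq : (fun σ : ℕ → E => fun i : Fin L => σ (i : ℕ)) ⁻¹' B ∩ Cyl w = Cyl w := by
      ext σ
      simp only [Set.mem_inter_iff, Set.mem_preimage]
      refine ⟨And.right, fun hσ => ⟨?_, hσ⟩⟩
      rw [hmem σ hσ]; exact hw
    rw [hseq, setIntegral_Xp M hPx x e₀ hfm (n - 1 - L) L w (by omega)]
  · rw [if_neg hw]
    have hseq : (fun σ : ℕ → E => fun i : Fin L => σ (i : ℕ)) ⁻¹' B ∩ Cyl w = ∅ := by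
      ext σ
      simp only [Set.mem_inter_iff, Set.mem_preimage, Set.mem_empty_iff_false, iff_false,
        not_and]
      intro hBσ hσ
      exact hw (by rwa [hmem σ hσ] at hBσ)
    rw [hseq]; simp

theorem measurable_Z (M : MarkovSystem V E K) (ν : Measure (ℕ → E)) (x : K)
    (f : E → K → EReal) (hfm : ∀ e, Measurable (f e)) (k j : ℕ) :
    Measurable (M.Z ν x f k j) := by
  unfold MarkovSystem.Z
  split_ifs with h1 h2 h3
  · exact (measurable_Xp M x hfm j).sub
      ((stronglyMeasurable_condExp.mono (measurable_orbit M x (j - 1)).comap_le).measurable)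
  · exact measurable_zero
  · exact ((stronglyMeasurable_condExp.mono (measurable_orbit M x _).comap_le).measurable).sub
      ((stronglyMeasurable_condExp.mono (measurable_orbit M x _).comap_le).measurable)
  · exact measurable_zero

theorem measurable_Z_restrict (M : MarkovSystem V E K) (ν : Measure (ℕ → E)) (x : K)
    (f : E → K → EReal) (hfm : ∀ e, Measurable (f e)) (e₀ : E) {k L j : ℕ}
    (hj : j + 1 ≤ L + k) :
    Measurable[MeasurableSpace.comap (fun σ : ℕ → E => fun i : Fin L => σ (i : ℕ))
      MeasurableSpace.pi] (M.Z ν x f k j) := by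
  unfold MarkovSystem.Z
  split_ifs with h1 h2 h3
  · subst h1
    refine Measurable.sub ?_ ?_
    · exact measurable_restrict_factor e₀ L (fun σ τ h =>
        Xp_factor M x f (by omega : 1 ≤ j) σ τ (fun i hi => h i (by omega)))
    · exact (stronglyMeasurable_condExp.mono (comap_orbit_le M x e₀ (by omega))).measurable
  · exact measurable_const
  · exact Measurable.sub
      ((stronglyMeasurable_condExp.mono (comap_orbit_le M x e₀ (by omega))).measurable)
      ((stronglyMeasurable_condExp.mono (comap_orbit_le M x e₀ (by omega))).measurable)
  · exact measurable_const

end ZAux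
end ZAux

open ZAux in
open MarkovSystem in
/-- The sequence `Z^k_n` is a martingale difference sequence:
`E(Z^k_n | Z^k_{n-1}, ..., Z^k_1) = 0` `P_x`-almost surely. -/
theorem Z_martingale_difference {V E K : Type} [DecidableEq V] [Fintype E]
    [MeasurableSpace E] [MeasurableSingletonClass E]
    [MetricSpace K] [MeasurableSpace K] [BorelSpace K]
    (M : MarkovSystem V E K)
    (Px : K → Measure (ℕ → E)) (hPx : M.IsMarkovMeasure Px)
    (f : E → K → EReal)
    (hfm : ∀ e, Measurable (f e))
    (hfc : ∀ e, ContinuousOn (f e) (M.Kv (M.i e)))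
    (hfb : ∀ e, ∃ C : ℝ, ∀ y ∈ M.Kv (M.i e),
      -(C : EReal) ≤ f e y ∧ f e y ≤ (C : EReal))
    (x : K) (k n : ℕ) (hk : 1 ≤ k) :
    (Px x)[M.Z (Px x) x f k n |
        ⨆ j ∈ Finset.Ico 1 n, MeasurableSpace.comap (M.Z (Px x) x f k j) inferInstance]
      =ᵐ[Px x] 0 := by
  classical
  haveI : IsProbabilityMeasure (Px x) := hPx.1 x
  obtain ⟨e₀, -⟩ : ∃ e : E, x ∈ M.Kv (M.i e) := by
    have hx : x ∈ ⋃ e : E, M.Kv (M.i e) := by rw [M.cover]; trivial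
    simpa using hx
  rcases eq_or_ne k 1 with hk1 | hk1
  · subst hk1
    by_cases hn : 1 < n
    · -- main case, k = 1
      have hGle : (⨆ j ∈ Finset.Ico 1 n,
          MeasurableSpace.comap (M.Z (Px x) x f 1 j) inferInstance) ≤ MeasurableSpace.pi :=
        iSup_le fun j => iSup_le fun _ => (measurable_Z M (Px x) x f hfm 1 j).comap_le
      have hGCL : (⨆ j ∈ Finset.Ico 1 n,
          MeasurableSpace.comap (M.Z (Px x) x f 1 j) inferInstance) ≤
          MeasurableSpace.comap (fun σ : ℕ → E => fun i : Fin (n - 1) => σ (i : ℕ))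
            MeasurableSpace.pi := by
        refine iSup_le fun j => iSup_le fun hj => ?_
        have hj' := Finset.mem_Ico.mp hj
        exact measurable_iff_comap_le.mp
          (measurable_Z_restrict M (Px x) x f hfm e₀ (k := 1) (L := n - 1) (by omega))
      have hZdef : M.Z (Px x) x f 1 n = fun σ =>
          M.Xp x f n σ - ((Px x)[M.Xp x f n | MeasurableSpace.comap
            (fun σ : ℕ → E => M.orbit x σ (n - 1)) inferInstance]) σ := by
        unfold MarkovSystem.Z
        rw [if_pos rfl, if_pos hn]
      have hXpint := integrable_Xp M hPx x e₀ hfm (by omega : 1 ≤ n)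
      have hZint : Integrable (M.Z (Px x) x f 1 n) (Px x) := by
        rw [hZdef]; exact hXpint.sub integrable_condExp
      refine (ae_eq_condExp_of_forall_setIntegral_eq hGle hZint
        (fun s _ _ => (integrable_zero _ _ _).integrableOn)
        (fun s hs _ => ?_)
        (stronglyMeasurable_const.aestronglyMeasurable)).symm
      have hsCL : MeasurableSet[MeasurableSpace.comap
          (fun σ : ℕ → E => fun i : Fin (n - 1) => σ (i : ℕ)) MeasurableSpace.pi] s :=
        hGCL s hs
      obtain ⟨B, -, rfl⟩ := hsCL
      simp only [Pi.zero_apply, integral_zero]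
      symm
      simp only [hZdef]
      rw [integral_sub hXpint.integrableOn integrable_condExp.integrableOn,
        setIntegral_Xp_eq_sum M hPx x e₀ hfm (by omega : (n - 1) + 1 ≤ n) B,
        setIntegral_condexp_eq_sum M hPx x e₀ hfm (by omega : (n - 1) + 1 ≤ n)
          (le_refl (n - 1)) B,
        sub_self]
    · have hZ : M.Z (Px x) x f 1 n = 0 := by
        unfold MarkovSystem.Z
        rw [if_pos rfl, if_neg hn]
      rw [hZ, condExp_zero]
  · by_cases hkn : k < n
    · -- main case, k ≥ 2
      have hk2 : 2 ≤ k := by omega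
      have hGle : (⨆ j ∈ Finset.Ico 1 n,
          MeasurableSpace.comap (M.Z (Px x) x f k j) inferInstance) ≤ MeasurableSpace.pi :=
        iSup_le fun j => iSup_le fun _ => (measurable_Z M (Px x) x f hfm k j).comap_le
      have hGCL : (⨆ j ∈ Finset.Ico 1 n,
          MeasurableSpace.comap (M.Z (Px x) x f k j) inferInstance) ≤
          MeasurableSpace.comap (fun σ : ℕ → E => fun i : Fin (n - k) => σ (i : ℕ))
            MeasurableSpace.pi := by
        refine iSup_le fun j => iSup_le fun hj => ?_
        have hj' := Finset.mem_Ico.mp hj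
        exact measurable_iff_comap_le.mp
          (measurable_Z_restrict M (Px x) x f hfm e₀ (k := k) (L := n - k) (by omega))
      have hZdef : M.Z (Px x) x f k n = fun σ =>
          ((Px x)[M.Xp x f n | MeasurableSpace.comap
            (fun σ : ℕ → E => M.orbit x σ (n - k + 1)) inferInstance]) σ
          - ((Px x)[M.Xp x f n | MeasurableSpace.comap
            (fun σ : ℕ → E => M.orbit x σ (n - k)) inferInstance]) σ := by
        unfold MarkovSystem.Z
        rw [if_neg hk1, if_pos hkn]
      have hZint : Integrable (M.Z (Px x) x f k n) (Px x) := by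
        rw [hZdef]; exact integrable_condExp.sub integrable_condExp
      refine (ae_eq_condExp_of_forall_setIntegral_eq hGle hZint
        (fun s _ _ => (integrable_zero _ _ _).integrableOn)
        (fun s hs _ => ?_)
        (stronglyMeasurable_const.aestronglyMeasurable)).symm
      have hsCL : MeasurableSet[MeasurableSpace.comap
          (fun σ : ℕ → E => fun i : Fin (n - k) => σ (i : ℕ)) MeasurableSpace.pi] s :=
        hGCL s hs
      obtain ⟨B, -, rfl⟩ := hsCL
      simp only [Pi.zero_apply, integral_zero]
      symm
      simp only [hZdef]
      rw [integral_sub integrable_condExp.integrableOn integrable_condExp.integrableOn,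
        setIntegral_condexp_eq_sum M hPx x e₀ hfm (by omega : (n - k + 1) + 1 ≤ n)
          (by omega : n - k ≤ n - k + 1) B,
        setIntegral_condexp_eq_sum M hPx x e₀ hfm (by omega : (n - k) + 1 ≤ n)
          (le_refl (n - k)) B,
        sub_self]
    · have hZ : M.Z (Px x) x f k n = 0 := by
        unfold MarkovSystem.Z
        rw [if_neg hk1, if_neg hkn]
      rw [hZ, condExp_zero]
end
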